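/- The set of rational numbers {F(p) : p an odd prime} is infinite, where F(p) := 47/64 + (1/128)·1/(2^{o(p)}−1) + (1/64)·(2^p/(2^p−1))·(2^{o(p)}/(2^{o(p)}−1))·Σ_{x∈L(p)} 2^{−(x+r(p,x))}. -/

import Mathlib

/-- `ℤ[1/2]`: the subring of `ℚ` of rationals whose denominator is a power of `2`. -/
def Zhalf : Subring ℚ where
  carrier := {q : ℚ | ∃ (m : ℤ) (n : ℕ), q = (m : ℚ) / 2 ^ n}
  zero_mem' := ⟨0, 0, by norm_num⟩
  one_mem' := ⟨1, 0, by norm_num⟩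
  add_mem' := by
    rintro a b ⟨m, n, rfl⟩ ⟨m', n', rfl⟩
    exact ⟨m * 2 ^ n' + m' * 2 ^ n, n + n', by push_cast [pow_add]; field_simp⟩
  mul_mem' := by
    rintro a b ⟨m, n, rfl⟩ ⟨m', n', rfl⟩
    exact ⟨m * m', n + n', by push_cast [pow_add]; field_simp⟩
  neg_mem' := by
    rintro a ⟨m, n, rfl⟩
    exact ⟨-m, n, by push_cast; ring⟩

/-- `o(p)`: the multiplicative order of `2` modulo `p`. -/
noncomputable def oOrd (p : ℕ) : ℕ := orderOf (2 : ZMod p)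

/-- `L(p)`: the set of `x` with `2 ≤ x ≤ p+1` congruent mod `p` to a power of `2`. -/
noncomputable def Lset (p : ℕ) : Finset ℕ :=
  letI : DecidablePred fun x : ℕ => ∃ i : ℕ, (2 : ZMod p) ^ i = (x : ZMod p) :=
    fun _ => Classical.propDecidable _
  (Finset.Icc 2 (p + 1)).filter fun x => ∃ i : ℕ, (2 : ZMod p) ^ i = (x : ZMod p)

/-- `r(p,x)`: the least natural number `r` with `2^r ≡ x (mod p)`. -/
noncomputable def rpx (p x : ℕ) : ℕ := sInf {r : ℕ | (2 : ZMod p) ^ r = (x : ZMod p)}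

/-- The value `F(p)` from the paper. -/
noncomputable def Fval (p : ℕ) : ℝ :=
  47 / 64 + (1 / 128) * (1 / (2 ^ oOrd p - 1)) +
    (1 / 64) * (2 ^ p / (2 ^ p - 1)) * ((2 : ℝ) ^ oOrd p / (2 ^ oOrd p - 1)) *
      ∑ x ∈ Lset p, (1 : ℝ) / 2 ^ (x + rpx p x)

/-!
As `p` runs through the odd primes, `F(p)` tends to `47/64 + σ/64`, where
`σ = ∑_{i ≥ 1} 2^{-(2^i + i)}`, while staying strictly above this limit; so it takes infinitely
many values.

The powers of two `x = 2^i < p` lie in `L(p)` with `r(p,x) = i`, so they contribute a partial sum of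
`σ` whose tail is at most `2^{-(p+1)}`. Every other `x ∈ L(p)` is either `p + 1` or has
`2^{r(p,x)} ≥ p` (a smaller power of two would equal `x`), so together they contribute `O(1/p)`.
From `2^{o(p)} ≡ 1 (mod p)` we get `p < 2^{o(p)} ≤ 2^p`: both prefactors tend to `1`, and the term
`1/(128 (2^{o(p)} - 1))` outweighs the deficit of the sum against `σ`.
-/

open Filter Topology Finset

theorem Filter.Tendsto.infinite_image {α X : Type*} [TopologicalSpace X] [T1Space X]
    {l : Filter α} [l.NeBot] {f : α → X} {c : X} {s : Set α} (hf : Tendsto f l (𝓝 c))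
    (hs : s ∈ l) (hne : ∀ᶠ x in l, f x ≠ c) : (f '' s).Infinite := by
  intro hfin
  have hnhds : (f '' s \ {c})ᶜ ∈ 𝓝 c :=
    hfin.sdiff.isClosed.isOpen_compl.mem_nhds fun h => h.2 (Set.mem_singleton c)
  obtain ⟨x, hxs, hfx, hxc⟩ :=
    ((show ∀ᶠ x in l, x ∈ s from hs).and ((hf.eventually_mem hnhds).and hne)).exists
  exact hfx ⟨⟨x, hxs, rfl⟩, hxc⟩

theorem tendsto_inv_sub_one_atTop : Tendsto (fun x : ℝ => 1 / (x - 1)) atTop (𝓝 0) := by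
  refine (tendsto_inv_atTop_zero.comp ?_).congr fun x => (one_div _).symm
  exact (tendsto_atTop_add_const_right atTop (-1) tendsto_id).congr fun x =>
    (sub_eq_add_neg x 1).symm

theorem tendsto_div_sub_one_atTop : Tendsto (fun x : ℝ => x / (x - 1)) atTop (𝓝 1) := by
  have h := (tendsto_const_nhds (x := (1 : ℝ))).add tendsto_inv_sub_one_atTop
  rw [add_zero] at h
  refine h.congr' ((eventually_gt_atTop 1).mono fun x hx => ?_)
  have : x - 1 ≠ 0 := sub_ne_zero.mpr hx.ne'
  field_simp
  ring

/-- The contribution `2^{-(x + r(p,x))}` of `x = 2^(j+1) < p`, for which `r(p,x) = j + 1`. -/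
noncomputable def powTerm (j : ℕ) : ℝ := (1 / 2) ^ (2 ^ (j + 1) + (j + 1))

noncomputable def powSum : ℝ := ∑' j, powTerm j

theorem powTerm_nonneg (j : ℕ) : 0 ≤ powTerm j := by
  unfold powTerm
  positivity

theorem summable_powTerm : Summable powTerm := by
  refine .of_nonneg_of_le powTerm_nonneg (fun j => ?_)
    (summable_geometric_of_lt_one (r := (1 / 2 : ℝ)) (by norm_num) (by norm_num))
  refine pow_le_pow_of_le_one (by norm_num) (by norm_num) ?_
  have := Nat.lt_two_pow_self (n := j + 1)
  omega

theorem sum_range_powTerm_le_powSum (m : ℕ) : ∑ j ∈ range m, powTerm j ≤ powSum :=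
  summable_powTerm.sum_le_tsum _ fun j _ => powTerm_nonneg j

theorem powSum_sub_sum_range_le {m n : ℕ} (h : n ≤ 2 ^ (m + 1)) :
    powSum - ∑ j ∈ range m, powTerm j ≤ (1 / 2) ^ (n + m) := by
  rw [powSum, ← summable_powTerm.sum_add_tsum_nat_add m, add_sub_cancel_left]
  have hgeom := summable_geometric_of_lt_one (r := (1 / 2 : ℝ)) (by norm_num) (by norm_num)
  calc ∑' j, powTerm (j + m) ≤ ∑' j, (1 / 2 : ℝ) ^ (n + m + 1) * (1 / 2) ^ j := by
        refine Summable.tsum_le_tsum (fun j => ?_)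
          ((summable_nat_add_iff m).mpr summable_powTerm) (hgeom.mul_left _)
        rw [powTerm, ← pow_add]
        refine pow_le_pow_of_le_one (by norm_num) (by norm_num) ?_
        have : 2 ^ (m + 1) ≤ 2 ^ (j + m + 1) := Nat.pow_le_pow_right two_pos (by omega)
        omega
    _ = (1 / 2) ^ (n + m) := by
        rw [tsum_mul_left, tsum_geometric_of_lt_one (by norm_num) (by norm_num), pow_succ]
        ring

noncomputable def Lsum (p : ℕ) : ℝ := ∑ x ∈ Lset p, (1 : ℝ) / 2 ^ (x + rpx p x)

theorem Lsum_nonneg (p : ℕ) : 0 ≤ Lsum p :=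
  sum_nonneg fun _ _ => by positivity

section Residues

variable {p : ℕ}

theorem isUnit_two_zmod (hp : Odd p) : IsUnit (2 : ZMod p) := by
  simpa using (ZMod.isUnit_iff_coprime 2 p).mpr (Nat.coprime_two_left.mpr hp)

theorem two_pow_ne_zero_zmod (hp : Odd p) (hp1 : 1 < p) (r : ℕ) : (2 : ZMod p) ^ r ≠ 0 :=
  haveI : Fact (1 < p) := ⟨hp1⟩
  ((isUnit_two_zmod hp).pow r).ne_zero

theorem two_pow_eq_of_lt {r x : ℕ} (h : (2 : ZMod p) ^ r = x) (hr : 2 ^ r < p) (hx : x < p) :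
    2 ^ r = x := by
  have h' : ((2 ^ r : ℕ) : ZMod p) = x := by push_cast; exact h
  rwa [ZMod.natCast_eq_natCast_iff', Nat.mod_eq_of_lt hr, Nat.mod_eq_of_lt hx] at h'

theorem oOrd_dvd_totient (hp : Odd p) : oOrd p ∣ p.totient := by
  rw [oOrd, ← (isUnit_two_zmod hp).unit_spec, orderOf_units]
  exact orderOf_dvd_of_pow_eq_one (ZMod.pow_totient _)

theorem oOrd_le (hp : Odd p) (hp1 : 1 < p) : oOrd p ≤ p :=
  (Nat.le_of_dvd (Nat.totient_pos.mpr (by omega)) (oOrd_dvd_totient hp)).trans (Nat.totient_le p)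

theorem lt_two_pow_oOrd (hp : Odd p) (hp1 : 1 < p) : p < 2 ^ oOrd p := by
  have hpos : 0 < oOrd p :=
    Nat.pos_of_dvd_of_pos (oOrd_dvd_totient hp) (Nat.totient_pos.mpr (by omega))
  have hone : (2 : ZMod p) ^ oOrd p = ((1 : ℕ) : ZMod p) := by
    rw [Nat.cast_one]; exact pow_orderOf_eq_one _
  rcases lt_trichotomy (2 ^ oOrd p) p with hlt | heq | hgt
  · have := two_pow_eq_of_lt hone hlt hp1
    have := Nat.one_lt_two_pow hpos.ne'
    omega
  · refine absurd ?_ (two_pow_ne_zero_zmod hp hp1 (oOrd p))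
    exact_mod_cast (congrArg (Nat.cast : ℕ → ZMod p) heq).trans (ZMod.natCast_self p)
  · exact hgt

theorem mem_Lset_iff {x : ℕ} :
    x ∈ Lset p ↔ (2 ≤ x ∧ x ≤ p + 1) ∧ ∃ i, (2 : ZMod p) ^ i = (x : ZMod p) := by
  simp [Lset]

theorem two_pow_rpx {x : ℕ} (hx : x ∈ Lset p) : (2 : ZMod p) ^ rpx p x = x :=
  Nat.sInf_mem (mem_Lset_iff.mp hx).2

theorem self_notMem_Lset (hp : Odd p) (hp1 : 1 < p) : p ∉ Lset p := fun h =>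
  two_pow_ne_zero_zmod hp hp1 _ ((two_pow_rpx h).trans (ZMod.natCast_self p))

theorem two_pow_mem_Lset {i : ℕ} (hi : 1 ≤ i) (hip : 2 ^ i < p) : 2 ^ i ∈ Lset p :=
  mem_Lset_iff.mpr ⟨⟨Nat.pow_le_pow_right two_pos hi, by omega⟩, i, by push_cast; rfl⟩

theorem rpx_two_pow {i : ℕ} (hip : 2 ^ i < p) : rpx p (2 ^ i) = i := by
  have hi : i ∈ {r : ℕ | (2 : ZMod p) ^ r = ((2 ^ i : ℕ) : ZMod p)} := by
    simp only [Set.mem_ofPred_eq, Nat.cast_pow, Nat.cast_ofNat]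
  have hle : rpx p (2 ^ i) ≤ i := Nat.sInf_le hi
  refine Nat.pow_right_injective le_rfl (two_pow_eq_of_lt (Nat.sInf_mem ⟨i, hi⟩) ?_ hip)
  exact (Nat.pow_le_pow_right two_pos hle).trans_lt hip

end Residues

section PowersOfTwo

variable {p m : ℕ}

theorem image_two_pow_subset_Lset (hm : 2 ^ m < p) :
    (range m).image (fun j => 2 ^ (j + 1)) ⊆ Lset p := by
  intro x hx
  obtain ⟨j, hj, rfl⟩ := mem_image.mp hx
  exact two_pow_mem_Lset (by omega)
    ((Nat.pow_le_pow_right two_pos (mem_range.mp hj)).trans_lt hm)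

theorem sum_image_two_pow (hm : 2 ^ m < p) :
    ∑ x ∈ (range m).image (fun j => 2 ^ (j + 1)), (1 : ℝ) / 2 ^ (x + rpx p x) =
      ∑ j ∈ range m, powTerm j := by
  rw [sum_image fun a _ b _ h => by simpa using Nat.pow_right_injective le_rfl h]
  refine sum_congr rfl fun j hj => ?_
  rw [rpx_two_pow ((Nat.pow_le_pow_right two_pos (mem_range.mp hj)).trans_lt hm), powTerm,
    one_div_pow]

theorem sum_range_powTerm_le_Lsum (hm : 2 ^ m < p) : ∑ j ∈ range m, powTerm j ≤ Lsum p := by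
  rw [← sum_image_two_pow hm]
  exact sum_le_sum_of_subset_of_nonneg (image_two_pow_subset_Lset hm) fun _ _ _ => by positivity

theorem one_div_two_pow_le_of_notMem_image (hp : Odd p) (hp1 : 1 < p) (hpm : p ≤ 2 ^ (m + 1))
    {x : ℕ} (hx : x ∈ Lset p) (hxP : x ∉ (range m).image (fun j => 2 ^ (j + 1))) :
    (1 : ℝ) / 2 ^ (x + rpx p x) ≤ (1 / 2) ^ x / p + if x = p + 1 then (1 / 2) ^ x else 0 := by
  rw [show (1 : ℝ) / 2 ^ (x + rpx p x) = (1 / 2) ^ x * (1 / 2 ^ rpx p x) by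
    rw [pow_add, one_div_pow, one_div_mul_one_div]]
  split_ifs with hxp
  · refine (mul_le_of_le_one_right (by positivity) ?_).trans
      (le_add_of_nonneg_left (by positivity))
    rw [div_le_one (by positivity)]
    exact one_le_pow₀ one_le_two
  · obtain ⟨⟨hx2, hxle⟩, -⟩ := mem_Lset_iff.mp hx
    have hxp' : x ≠ p := fun h => self_notMem_Lset hp hp1 (h ▸ hx)
    have hxlt : x < p := by omega
    have hpr : p ≤ 2 ^ rpx p x := by
      by_contra! hlt
      have hxr := two_pow_eq_of_lt (two_pow_rpx hx) hlt hxlt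
      have hr1 : 1 ≤ rpx p x := Nat.one_le_iff_ne_zero.mpr fun h0 => by simp [h0] at hxr; omega
      have hrm : rpx p x < m + 1 := (Nat.pow_lt_pow_iff_right (by norm_num)).mp (hlt.trans_le hpm)
      exact hxP (mem_image.mpr ⟨rpx p x - 1, mem_range.mpr (by omega), by
        rw [Nat.sub_add_cancel hr1, hxr]⟩)
    rw [add_zero, div_eq_mul_one_div ((1 / 2 : ℝ) ^ x)]
    gcongr
    exact_mod_cast hpr

theorem Lsum_le_sum_range_powTerm_add (hp : Odd p) (hp1 : 1 < p) (hmp : 2 ^ m < p)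
    (hpm : p ≤ 2 ^ (m + 1)) : Lsum p ≤ ∑ j ∈ range m, powTerm j + 3 / p := by
  have hp0 : (0 : ℝ) < p := by exact_mod_cast (by omega : 0 < p)
  rw [Lsum, ← sum_sdiff (image_two_pow_subset_Lset hmp), sum_image_two_pow hmp, add_comm]
  gcongr
  have hsub : Lset p \ (range m).image (fun j => 2 ^ (j + 1)) ⊆ range (p + 2) := fun x hx =>
    mem_range.mpr (by have := (mem_Lset_iff.mp (mem_sdiff.mp hx).1).1.2; omega)
  calc _ ≤ ∑ x ∈ Lset p \ (range m).image (fun j => 2 ^ (j + 1)),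
          ((1 / 2 : ℝ) ^ x / p + if x = p + 1 then (1 / 2) ^ x else 0) :=
        sum_le_sum fun x hx => one_div_two_pow_le_of_notMem_image hp hp1 hpm
          (mem_sdiff.mp hx).1 (mem_sdiff.mp hx).2
    _ ≤ ∑ x ∈ range (p + 2), ((1 / 2 : ℝ) ^ x / p + if x = p + 1 then (1 / 2) ^ x else 0) :=
        sum_le_sum_of_subset_of_nonneg hsub fun _ _ _ => by positivity
    _ = (∑ x ∈ range (p + 2), (1 / 2 : ℝ) ^ x) / p + (1 / 2) ^ (p + 1) := by
        rw [sum_add_distrib, ← sum_div, sum_ite_eq', if_pos (mem_range.mpr (by omega))]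
    _ ≤ 2 / p + 1 / p := by
        gcongr
        · exact sum_geometric_two_le _
        · rw [one_div_pow]
          gcongr
          exact_mod_cast (Nat.lt_two_pow_self (n := p + 1)).le.trans' (by omega)
    _ = 3 / p := by ring

theorem exists_two_pow_lt_le (hp1 : 1 < p) : ∃ m, 2 ^ m < p ∧ p ≤ 2 ^ (m + 1) :=
  ⟨Nat.log 2 (p - 1), (Nat.pow_log_le_self 2 (by omega)).trans_lt (by omega),
    by have := Nat.lt_pow_succ_log_self one_lt_two (p - 1); omega⟩

end PowersOfTwo

theorem powSum_sub_le_Lsum {p : ℕ} (hp : 2 < p) : powSum - (1 / 2) ^ (p + 1) ≤ Lsum p := by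
  obtain ⟨m, hmp, hpm⟩ := exists_two_pow_lt_le (p := p) (by omega)
  have hm : 1 ≤ m := Nat.one_le_iff_ne_zero.mpr fun h => by simp [h] at hpm; omega
  have htail := powSum_sub_sum_range_le hpm
  have hpow : (1 / 2 : ℝ) ^ (p + m) ≤ (1 / 2) ^ (p + 1) :=
    pow_le_pow_of_le_one (by norm_num) (by norm_num) (by omega)
  linarith [sum_range_powTerm_le_Lsum hmp]

theorem Lsum_le_powSum_add {p : ℕ} (hp : Odd p) (hp1 : 1 < p) : Lsum p ≤ powSum + 3 / p := by
  obtain ⟨m, hmp, hpm⟩ := exists_two_pow_lt_le hp1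
  linarith [Lsum_le_sum_range_powTerm_add hp hp1 hmp hpm, sum_range_powTerm_le_powSum m]

theorem tendsto_Lsum : Tendsto Lsum (atTop ⊓ 𝓟 {p | Odd p}) (𝓝 powSum) := by
  have hlow : Tendsto (fun p : ℕ => powSum - (1 / 2 : ℝ) ^ (p + 1)) atTop (𝓝 (powSum - 0)) :=
    tendsto_const_nhds.sub ((tendsto_pow_atTop_nhds_zero_of_lt_one (by norm_num)
      (by norm_num)).comp (tendsto_add_atTop_nat 1))
  have hup : Tendsto (fun p : ℕ => powSum + 3 / (p : ℝ)) atTop (𝓝 (powSum + 0)) :=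
    tendsto_const_nhds.add (tendsto_const_div_atTop_nhds_zero_nat 3)
  rw [sub_zero] at hlow
  rw [add_zero] at hup
  refine tendsto_of_tendsto_of_tendsto_of_le_of_le' (hlow.mono_left inf_le_left)
    (hup.mono_left inf_le_left) ?_ ?_ <;> refine eventually_inf_principal.mpr
      ((eventually_gt_atTop 2).mono fun p hp2 hp => ?_)
  · exact powSum_sub_le_Lsum hp2
  · exact Lsum_le_powSum_add hp (by omega)

theorem tendsto_two_pow_oOrd :
    Tendsto (fun p => (2 : ℝ) ^ oOrd p) (atTop ⊓ 𝓟 {p | Odd p}) atTop :=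
  tendsto_atTop_mono' _ (eventually_inf_principal.mpr ((eventually_gt_atTop 1).mono
      fun p hp1 hp => show (p : ℝ) ≤ 2 ^ oOrd p by exact_mod_cast (lt_two_pow_oOrd hp hp1).le))
    (tendsto_natCast_atTop_atTop.mono_left inf_le_left)

theorem tendsto_Fval : Tendsto Fval (atTop ⊓ 𝓟 {p | Odd p}) (𝓝 (47 / 64 + powSum / 64)) := by
  have hA := (tendsto_pow_atTop_atTop_of_one_lt (one_lt_two (α := ℝ))).mono_left
    (inf_le_left (b := 𝓟 {p | Odd p}))
  have hB := tendsto_two_pow_oOrd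
  have h := ((tendsto_const_nhds (x := (47 / 64 : ℝ))).add
    ((tendsto_inv_sub_one_atTop.comp hB).const_mul (1 / 128))).add
    ((((tendsto_div_sub_one_atTop.comp hA).const_mul (1 / 64)).mul
      (tendsto_div_sub_one_atTop.comp hB)).mul tendsto_Lsum)
  rw [show 47 / 64 + powSum / 64 = 47 / 64 + 1 / 128 * 0 + 1 / 64 * 1 * 1 * powSum by ring]
  exact h

theorem lt_Fval {p : ℕ} (hp : Odd p) (hp1 : 1 < p) : 47 / 64 + powSum / 64 < Fval p := by
  have hBA : (2 : ℝ) ^ oOrd p ≤ 2 ^ p := pow_le_pow_right₀ one_le_two (oOrd_le hp hp1)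
  have hB : 1 < (2 : ℝ) ^ oOrd p := one_lt_pow₀ one_lt_two
    (Nat.one_lt_two_pow_iff.mp (hp1.trans (lt_two_pow_oOrd hp hp1)))
  have hdeficit := powSum_sub_le_Lsum (p := p) (by obtain ⟨k, rfl⟩ := hp; omega)
  rw [one_div_pow, pow_succ, mul_comm] at hdeficit
  set A : ℝ := 2 ^ p
  set B : ℝ := 2 ^ oOrd p
  have hfactor : 1 ≤ A / (A - 1) * (B / (B - 1)) :=
    one_le_mul_of_one_le_of_one_le ((one_le_div (by linarith)).mpr (by linarith))
      ((one_le_div (by linarith)).mpr (by linarith))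
  have hS : Lsum p ≤ A / (A - 1) * (B / (B - 1)) * Lsum p :=
    le_mul_of_one_le_left (Lsum_nonneg p) hfactor
  have hgap : 1 / (2 * A) < 1 / 2 * (1 / (B - 1)) := by
    rw [one_div_mul_one_div]
    gcongr
    linarith
  show _ < 47 / 64 + 1 / 128 * (1 / (B - 1)) +
    1 / 64 * (A / (A - 1)) * (B / (B - 1)) * Lsum p
  linarith

/-- The set of rational numbers `{F(p) : p an odd prime}` is infinite. -/
theorem statement6 :
    {x : ℝ | ∃ p : ℕ, p.Prime ∧ p ≠ 2 ∧ Fval p = x}.Infinite := by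
  have hprimes : {p : ℕ | p.Prime ∧ p ≠ 2}.Infinite :=
    Nat.infinite_setOfPred_prime.sdiff (Set.finite_singleton 2)
  have := frequently_iff_neBot.mp (Nat.frequently_atTop_iff_infinite.mpr hprimes)
  have hodd : {p : ℕ | p.Prime ∧ p ≠ 2} ⊆ {p | Odd p} := fun p hp => hp.1.odd_of_ne_two hp.2
  have hlim := tendsto_Fval.mono_left (inf_le_inf_left _ (principal_mono.mpr hodd))
  have hne : ∀ᶠ p in atTop ⊓ 𝓟 {p : ℕ | p.Prime ∧ p ≠ 2}, Fval p ≠ 47 / 64 + powSum / 64 :=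
    eventually_inf_principal.mpr (.of_forall fun p hp => (lt_Fval (hodd hp) hp.1.one_lt).ne')
  convert hlim.infinite_image (mem_inf_of_right (mem_principal_self _)) hne using 1
  ext
  simp [and_assoc]
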